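/- arXiv:2605.23659 — 3 statements merged into one kernel-verified Lean document; each statement's English description precedes it below -/
import Mathlib

section
/- Let f_n, f : [0,∞) → [0,∞) be non-decreasing with f(0) = 0, f(x) → ∞ as x → ∞, and f strictly increasing. If f_n(x) → f(x) for all x in a dense subset D ⊂ [0,∞), then for every T > 0, sup_{u ∈ [0,T]} |f_n⁻¹(u) − f⁻¹(u)| → 0 as n → ∞, where f_n⁻¹ and f⁻¹ denote right-continuous inverses. -/
open Filter Set
open scoped NNReal Topology

/-- The right-continuous inverse `g⁻¹(t) := inf{x ≥ 0 : g(x) > t}`. -/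
noncomputable def rcInv (g : ℝ≥0 → ℝ≥0) (t : ℝ≥0) : ℝ≥0 :=
  sInf {x | g x > t}

lemma rcInv_le {g : ℝ≥0 → ℝ≥0} {t x : ℝ≥0} (h : t < g x) : rcInv g t ≤ x :=
  csInf_le' h

lemma le_rcInv {g : ℝ≥0 → ℝ≥0} (hg : Monotone g) {t x y : ℝ≥0}
    (hy : t < g y) (hx : g x ≤ t) : x ≤ rcInv g t := by
  refine le_csInf ⟨y, hy⟩ fun b hb => ?_
  by_contra hbx
  push_neg at hbx
  exact absurd (lt_of_le_of_lt (le_trans (hg hbx.le) hx) hb) (lt_irrefl _)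

lemma lt_g_of_rcInv_lt {g : ℝ≥0 → ℝ≥0} (hg : Monotone g)
    (hgtop : Tendsto g atTop atTop) {u d : ℝ≥0} (h : rcInv g u < d) : u < g d := by
  have hne : {x : ℝ≥0 | g x > u}.Nonempty := (hgtop.eventually_gt_atTop u).exists
  obtain ⟨z, hz, hzd⟩ := exists_lt_of_csInf_lt hne h
  exact lt_of_lt_of_le hz (hg hzd.le)

lemma g_lt_of_lt_rcInv {g : ℝ≥0 → ℝ≥0} (hg : StrictMono g)
    {u d : ℝ≥0} (h : d < rcInv g u) : g d < u := by
  obtain ⟨d', hd1, hd2⟩ := exists_between h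
  have : ¬ (u < g d') := fun hc => absurd (rcInv_le hc) (not_le.2 hd2)
  exact lt_of_lt_of_le (hg hd1) (not_lt.1 this)

/-- Let `f_n, f : [0,∞) → [0,∞)` be non-decreasing with `f 0 = 0`,
`f(x) → ∞`, and `f` strictly increasing. If `f_n → f` pointwise on a dense subset
`D ⊆ [0,∞)`, then for every `T > 0`, `sup_{u ∈ [0,T]} |f_n⁻¹(u) − f⁻¹(u)| → 0`,
i.e. the right-continuous inverses converge uniformly on `[0,T]`. -/
theorem stmt1
    (f : ℕ → ℝ≥0 → ℝ≥0) (g : ℝ≥0 → ℝ≥0)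
    (hfmono : ∀ n, Monotone (f n)) (hgmono : Monotone g)
    (hgstrict : StrictMono g)
    (hg0 : g 0 = 0) (hgtop : Tendsto g atTop atTop)
    (D : Set ℝ≥0) (hD : Dense D)
    (hconv : ∀ x ∈ D, Tendsto (fun n => f n x) atTop (𝓝 (g x))) :
    ∀ T : ℝ≥0, 0 < T →
      TendstoUniformlyOn (fun n => rcInv (f n)) (rcInv g) atTop (Set.Icc 0 T) := by
  intro T _
  rw [← tendstoLocallyUniformlyOn_iff_tendstoUniformlyOn_of_compact isCompact_Icc]
  rw [Metric.tendstoLocallyUniformlyOn_iff]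
  intro ε hε u _
  set x0 := rcInv g u with hx0def
  set η : ℝ≥0 := (ε / 2).toNNReal with hηdef
  have hηε : (η : ℝ) = ε / 2 := Real.coe_toNNReal _ (by linarith)
  have hη : 0 < η := by
    rw [← NNReal.coe_lt_coe, hηε]; simpa using by linarith
  -- upper point
  obtain ⟨dhi, hdhiD, hdhi1, hdhi2⟩ :=
    hD.exists_between (lt_add_of_pos_right x0 hη)
  have hgdhi : u < g dhi := lt_g_of_rcInv_lt hgmono hgtop hdhi1
  obtain ⟨u'', hu''1, hu''2⟩ := exists_between hgdhi
  have hevhi : ∀ᶠ n in atTop, u'' < f n dhi :=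
    (hconv dhi hdhiD).eventually (eventually_gt_nhds hu''2)
  by_cases hx0 : x0 < η
  · -- small case: only upper bound needed
    refine ⟨Iio u'', mem_nhdsWithin_of_mem_nhds (Iio_mem_nhds hu''1), ?_⟩
    filter_upwards [hevhi] with n hn v hv
    have h1 : rcInv (f n) v ≤ dhi := rcInv_le (lt_trans hv hn)
    have h2 : rcInv g v ≤ dhi := rcInv_le (lt_trans hv hu''2)
    have hc1 : ((rcInv (f n) v : ℝ≥0) : ℝ) ≤ dhi := NNReal.coe_le_coe.2 h1
    have hc2 : ((rcInv g v : ℝ≥0) : ℝ) ≤ dhi := NNReal.coe_le_coe.2 h2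
    have hc3 : ((dhi : ℝ≥0) : ℝ) < (x0 : ℝ) + η := by
      have := NNReal.coe_lt_coe.2 hdhi2; simpa [NNReal.coe_add] using this
    have hc4 : ((x0 : ℝ≥0) : ℝ) < η := NNReal.coe_lt_coe.2 hx0
    rw [NNReal.dist_eq, abs_sub_lt_iff]
    constructor <;> nlinarith [NNReal.coe_nonneg (rcInv (f n) v),
      NNReal.coe_nonneg (rcInv g v)]
  · -- large case: two-sided bound
    push_neg at hx0
    have hx0pos : 0 < x0 := lt_of_lt_of_le hη hx0
    obtain ⟨dlo, hdloD, hdlo1, hdlo2⟩ :=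
      hD.exists_between (tsub_lt_self hx0pos hη)
    have hgdlo : g dlo < u := g_lt_of_lt_rcInv hgstrict hdlo2
    obtain ⟨u''', hu'''1, hu'''2⟩ := exists_between hgdlo
    have hevlo : ∀ᶠ n in atTop, f n dlo < u''' :=
      (hconv dlo hdloD).eventually (eventually_lt_nhds hu'''1)
    refine ⟨Ioo u''' u'', mem_nhdsWithin_of_mem_nhds (Ioo_mem_nhds hu'''2 hu''1), ?_⟩
    filter_upwards [hevhi, hevlo] with n hnhi hnlo v hv
    obtain ⟨hv1, hv2⟩ := hv
    have h1 : rcInv (f n) v ≤ dhi := rcInv_le (lt_trans hv2 hnhi)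
    have h2 : rcInv g v ≤ dhi := rcInv_le (lt_trans hv2 hu''2)
    have h3 : dlo ≤ rcInv (f n) v :=
      le_rcInv (hfmono n) (lt_trans hv2 hnhi) (le_of_lt (lt_trans hnlo hv1))
    have h4 : dlo ≤ rcInv g v :=
      le_rcInv hgmono (lt_trans hv2 hu''2) (le_of_lt (lt_trans hu'''1 hv1))
    have hc1 : ((rcInv (f n) v : ℝ≥0) : ℝ) ≤ dhi := NNReal.coe_le_coe.2 h1
    have hc2 : ((rcInv g v : ℝ≥0) : ℝ) ≤ dhi := NNReal.coe_le_coe.2 h2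
    have hc3 : ((dlo : ℝ≥0) : ℝ) ≤ rcInv (f n) v := NNReal.coe_le_coe.2 h3
    have hc4 : ((dlo : ℝ≥0) : ℝ) ≤ rcInv g v := NNReal.coe_le_coe.2 h4
    have hc5 : ((dhi : ℝ≥0) : ℝ) < (x0 : ℝ) + η := by
      have := NNReal.coe_lt_coe.2 hdhi2; simpa [NNReal.coe_add] using this
    have hc6 : (x0 : ℝ) - η < dlo := by
      have := NNReal.coe_lt_coe.2 hdlo1
      rwa [NNReal.coe_sub hx0] at this
    rw [NNReal.dist_eq, abs_sub_lt_iff]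
    constructor <;> nlinarith
end

section
/- Let d ∈ ℕ and let x_n^{(i)}, x^{(i)} ∈ D([0,∞),ℝ) for 1 ≤ i ≤ d. Assume x_n^{(i)} → x^{(i)} in the J₁-topology on D([0,∞),ℝ) for each i, and that the limits have no common jump times: Δx^{(i)}(t)·Δx^{(j)}(t) = 0 for all t ≥ 0 and i ≠ j, where Δf(t) := f(t) − f(t−). Then the vector-valued functions (x_n^{(1)},…,x_n^{(d)}) converge to (x^{(1)},…,x^{(d)}) in the J₁-topology on D([0,∞),ℝ^d). -/
open Filter Set
open scoped NNReal Topology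

/-- A function `[0,∞) → E` is càdlàg: right-continuous with left limits. -/
def Cadlag {E : Type*} [TopologicalSpace E] (f : ℝ≥0 → E) : Prop :=
  ∀ t : ℝ≥0, ContinuousWithinAt f (Set.Ici t) t ∧
    ∃ l : E, Tendsto f (nhdsWithin t (Set.Iio t)) (𝓝 l)

/-- Convergence in Skorokhod's J₁-topology on `D([0,∞), E)`. -/
def J1Tendsto {E : Type*} [NormedAddCommGroup E] (x : ℕ → ℝ≥0 → E) (y : ℝ≥0 → E) : Prop :=
  ∀ T : ℝ≥0, 0 < T → ∃ lam : ℕ → ℝ≥0 → ℝ≥0,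
    (∀ n, Continuous (lam n) ∧ StrictMono (lam n) ∧ lam n 0 = 0 ∧
      Tendsto (lam n) atTop atTop) ∧
    (∀ ε : ℝ, 0 < ε → ∀ᶠ n in atTop, ∀ t ∈ Set.Icc (0 : ℝ≥0) T,
      ‖x n (lam n t) - y t‖ < ε ∧ |((lam n t : ℝ)) - (t : ℝ)| < ε)

/-- The jump `Δf(t) := f(t) − f(t−)` of a path at time `t`. -/
noncomputable def jumpAt (f : ℝ≥0 → ℝ) (t : ℝ≥0) : ℝ :=
  f t - Function.leftLim f t

/-!
Fix `T` and `ε`. The vector path `y` oscillates by at most `ε / 4` on each cell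
`[τ m, τ (m + 1))` of a finite grid of `[0, T + 1]`. Given time changes `L i` that are
`δ`-good for the coordinates, with `δ` small against the mesh of the grid, one common time change
`Λ` interpolates piecewise linearly through the nodes, sending `τ m` to `L i (τ m)` if `y i` jumps
at `τ m` (no other coordinate does) and to `τ m` otherwise. Then `(L i)⁻¹ ∘ Λ` moves each time by
less than the mesh and never across a jump of `y i`, so `x n i ∘ Λ` stays `ε`-close to `y i`.
A diagonal argument turns "for every `ε`, eventually such a `Λ` exists" into one sequence of
time changes.
-/

structure IsTimeChange (φ : ℝ≥0 → ℝ≥0) : Prop where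
  continuous : Continuous φ
  strictMono : StrictMono φ
  map_zero : φ 0 = 0
  tendsto_atTop : Tendsto φ atTop atTop

namespace IsTimeChange

lemma id : IsTimeChange id := ⟨continuous_id, strictMono_id, rfl, tendsto_id⟩

lemma surjective {φ : ℝ≥0 → ℝ≥0} (hφ : IsTimeChange φ) : Function.Surjective φ := by
  intro v
  obtain ⟨B, hB⟩ := (hφ.tendsto_atTop.eventually_ge_atTop v).exists
  obtain ⟨s, -, hs⟩ := intermediate_value_Icc (zero_le : 0 ≤ B) hφ.continuous.continuousOn
    (⟨by simp [hφ.map_zero], hB⟩ : v ∈ Icc (φ 0) (φ B))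
  exact ⟨s, hs⟩

end IsTimeChange

lemma exists_seq_forall_eventually {α : Type*} [Nonempty α] {P : ℕ → ℝ → α → Prop}
    (hP : ∀ n a ε ε', ε ≤ ε' → P n ε a → P n ε' a)
    (h : ∀ ε > 0, ∀ᶠ n in atTop, ∃ a, P n ε a) :
    ∃ a : ℕ → α, ∀ ε > 0, ∀ᶠ n in atTop, P n ε (a n) := by
  classical
  let Q (n j : ℕ) : Prop := ∃ a, P n (1 / (j + 1)) a
  -- the best accuracy `1 / (j + 1)`, `j ≤ n`, achievable at time `n`
  let level (n : ℕ) : ℕ := Nat.findGreatest (Q n) n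
  refine ⟨fun n => if hQ : Q n (level n) then hQ.choose else Classical.arbitrary α,
    fun ε hε => ?_⟩
  obtain ⟨j, hj⟩ := exists_nat_one_div_lt hε
  filter_upwards [eventually_ge_atTop j, h _ Nat.one_div_pos_of_nat] with n hjn hn
  have hQ : Q n (level n) := Nat.findGreatest_spec hjn hn
  have hj_le : (j : ℝ) ≤ level n := by exact_mod_cast Nat.le_findGreatest hjn hn
  rw [dif_pos hQ]
  refine hP _ _ _ _ ?_ hQ.choose_spec
  calc 1 / ((level n : ℝ) + 1) ≤ 1 / (j + 1) := by gcongr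
    _ ≤ ε := hj.le

theorem j1Tendsto_iff {E : Type*} [NormedAddCommGroup E] {x : ℕ → ℝ≥0 → E} {y : ℝ≥0 → E} :
    J1Tendsto x y ↔ ∀ T : ℝ≥0, 0 < T → ∀ ε : ℝ, 0 < ε → ∀ᶠ n in atTop, ∃ φ, IsTimeChange φ ∧
      ∀ t ∈ Icc 0 T, ‖x n (φ t) - y t‖ < ε ∧ |(φ t : ℝ) - t| < ε := by
  refine forall₂_congr fun T _ => ⟨?_, fun h => ?_⟩
  · rintro ⟨φ, hφ, hconv⟩ ε hε
    refine (hconv ε hε).mono fun n hn => ?_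
    obtain ⟨hcont, hmono, hzero, htop⟩ := hφ n
    exact ⟨φ n, ⟨hcont, hmono, hzero, htop⟩, hn⟩
  · have : Nonempty {φ // IsTimeChange φ} := ⟨⟨id, IsTimeChange.id⟩⟩
    obtain ⟨φ, hφ⟩ := exists_seq_forall_eventually
      (P := fun n ε (φ : {φ // IsTimeChange φ}) =>
        ∀ t ∈ Icc 0 T, ‖x n (φ.1 t) - y t‖ < ε ∧ |(φ.1 t : ℝ) - t| < ε)
      (fun _ _ _ _ hεε' h t ht => (h t ht).imp (·.trans_le hεε') (·.trans_le hεε'))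
      fun ε hε => (h ε hε).mono fun _ ⟨φ, hφ, hφε⟩ => ⟨⟨φ, hφ⟩, hφε⟩
    exact ⟨fun n => (φ n).1, fun n => let hφn := (φ n).2
      ⟨hφn.continuous, hφn.strictMono, hφn.map_zero, hφn.tendsto_atTop⟩, hφ⟩

section Oscillation

variable {α E : Type*} [PseudoMetricSpace E]

def OscLE (f : α → E) (s : Set α) (ε : ℝ) : Prop :=
  ∀ u ∈ s, ∀ v ∈ s, dist (f u) (f v) ≤ ε

lemma OscLE.mono {f : α → E} {s t : Set α} {ε : ℝ} (h : OscLE f t ε) (hst : s ⊆ t) :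
    OscLE f s ε :=
  fun u hu v hv => h u (hst hu) v (hst hv)

lemma oscLE_of_forall_dist_le {f : α → E} {s : Set α} {ε : ℝ} (c : E)
    (h : ∀ u ∈ s, dist (f u) c ≤ ε / 2) : OscLE f s ε :=
  fun u hu v hv => (dist_triangle_right _ _ c).trans (by linarith [h u hu, h v hv])

lemma OscLE.apply {ι : Type*} [Fintype ι] {F : α → ι → E} {s : Set α} {ε : ℝ}
    (h : OscLE F s ε) (i : ι) : OscLE (fun t => F t i) s ε :=
  fun u hu v hv => (dist_le_pi_dist _ _ i).trans (h u hu v hv)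

end Oscillation

lemma Cadlag.pi {ι : Type*} {π : ι → Type*} [∀ i, TopologicalSpace (π i)]
    {F : ℝ≥0 → ∀ i, π i} (h : ∀ i, Cadlag fun t => F t i) : Cadlag F := by
  refine fun t => ⟨continuousWithinAt_pi.2 fun i => (h i t).1, ?_⟩
  choose l hl using fun i => (h i t).2
  exact ⟨l, tendsto_pi_nhds.2 hl⟩

section Grid

variable {E : Type*} [PseudoMetricSpace E] {f : ℝ≥0 → E} {ε : ℝ}

lemma Cadlag.exists_oscLE_Ico (hf : Cadlag f) (t : ℝ≥0) (hε : 0 < ε) :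
    ∃ u > t, OscLE f (Ico t u) ε := by
  obtain ⟨u, hu, hsub⟩ := mem_nhdsGE_iff_exists_Ico_subset.1
    ((hf t).1 (Metric.closedBall_mem_nhds (f t) (half_pos hε)))
  exact ⟨u, hu, oscLE_of_forall_dist_le (f t) fun v hv => hsub hv⟩

lemma Cadlag.exists_oscLE_Ioo (hf : Cadlag f) {t : ℝ≥0} (ht : 0 < t) (hε : 0 < ε) :
    ∃ u < t, OscLE f (Ioo u t) ε := by
  obtain ⟨l, hl⟩ := (hf t).2
  obtain ⟨u, hu, hsub⟩ := (mem_nhdsLT_iff_exists_Ioo_subset' ht).1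
    (hl (Metric.closedBall_mem_nhds l (half_pos hε)))
  exact ⟨u, hu, oscLE_of_forall_dist_le l fun v hv => hsub hv⟩

structure IsOscGrid (f : ℝ≥0 → E) (ε : ℝ) (τ : ℕ → ℝ≥0) (k : ℕ) : Prop where
  zero : τ 0 = 0
  lt_succ : ∀ m < k, τ m < τ (m + 1)
  oscLE : ∀ m < k, OscLE f (Ico (τ m) (τ (m + 1))) ε

variable {τ : ℕ → ℝ≥0} {k : ℕ}

lemma IsOscGrid.snoc (hG : IsOscGrid f ε τ k) {s : ℝ≥0} (hs : τ k < s)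
    (hosc : OscLE f (Ico (τ k) s) ε) :
    IsOscGrid f ε (fun m => if m ≤ k then τ m else s) (k + 1) where
  zero := by simp [hG.zero]
  lt_succ m hm := by
    rcases Nat.lt_succ_iff_lt_or_eq.1 hm with h | rfl
    · simpa [h.le, Nat.succ_le_of_lt h] using hG.lt_succ m h
    · simpa using hs
  oscLE m hm := by
    rcases Nat.lt_succ_iff_lt_or_eq.1 hm with h | rfl
    · simpa [h.le, Nat.succ_le_of_lt h] using hG.oscLE m h
    · simpa using hosc

lemma IsOscGrid.monotoneOn (hG : IsOscGrid f ε τ k) : MonotoneOn τ (Iic k) :=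
  (strictMonoOn_Iic_of_lt_succ hG.lt_succ).monotoneOn

lemma IsOscGrid.apply {ι : Type*} [Fintype ι] {F : ℝ≥0 → ι → E} (hG : IsOscGrid F ε τ k)
    (i : ι) : IsOscGrid (fun t => F t i) ε τ k :=
  ⟨hG.zero, hG.lt_succ, fun m hm => (hG.oscLE m hm).apply i⟩

lemma Cadlag.exists_isOscGrid (hf : Cadlag f) (hε : 0 < ε) (T : ℝ≥0) :
    ∃ k τ, IsOscGrid f ε τ k ∧ τ k = T := by
  let P (s : ℝ≥0) : Prop := ∃ k τ, IsOscGrid f ε τ k ∧ τ k = s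
  have extend : ∀ s s', s < s' → P s → OscLE f (Ico s s') ε → P s' := by
    rintro s s' hss ⟨k, τ, hG, rfl⟩ hosc
    exact ⟨k + 1, _, hG.snoc hss hosc, by simp⟩
  let A := {s | s ≤ T ∧ P s}
  have h0 : 0 ∈ A := ⟨zero_le, 0, fun _ => 0, ⟨rfl, by simp, by simp⟩, rfl⟩
  have hbdd : BddAbove A := ⟨T, fun s hs => hs.1⟩
  -- `A` contains its supremum since `f` has a left limit there
  have hS : sSup A ∈ A := by
    refine ⟨csSup_le ⟨0, h0⟩ fun s hs => hs.1, ?_⟩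
    rcases (zero_le : 0 ≤ sSup A).eq_or_lt with hS0 | hS0
    · exact hS0 ▸ h0.2
    obtain ⟨u, hu, hosc⟩ := hf.exists_oscLE_Ioo hS0 hε
    obtain ⟨s, hsA, hus⟩ := exists_lt_of_lt_csSup ⟨0, h0⟩ hu
    rcases (le_csSup hbdd hsA).eq_or_lt with hsS | hsS
    · exact hsS ▸ hsA.2
    exact extend s _ hsS hsA.2 (hosc.mono fun v hv => ⟨hus.trans_le hv.1, hv.2⟩)
  -- and it is `T` since `f` is right-continuous there
  rcases hS.1.eq_or_lt with hST | hST
  · exact hST ▸ hS.2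
  obtain ⟨u, hu, hosc⟩ := hf.exists_oscLE_Ico (sSup A) hε
  have hmem : min u T ∈ A := ⟨min_le_right _ _, extend _ _ (lt_min hu hST) hS.2
    (hosc.mono (Ico_subset_Ico_right (min_le_left _ _)))⟩
  exact absurd (le_csSup hbdd hmem) (lt_min hu hST).not_ge

end Grid

lemma exists_mem_Ico_succ {α : Type*} [LinearOrder α] {τ : ℕ → α} {k : ℕ} {t : α}
    (ht : t ∈ Ico (τ 0) (τ k)) : ∃ m < k, t ∈ Ico (τ m) (τ (m + 1)) := by
  induction k with
  | zero => exact absurd ht.2 ht.1.not_gt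
  | succ k ih =>
    rcases lt_or_ge t (τ k) with h | h
    · obtain ⟨m, hm, hmt⟩ := ih ⟨ht.1, h⟩
      exact ⟨m, hm.trans (Nat.lt_succ_self k), hmt⟩
    · exact ⟨k, Nat.lt_succ_self k, h, ht.2⟩

section LinearInterp

def ramp (p q t : ℝ) : ℝ := max (min t q) p - p

lemma ramp_of_le {p q t : ℝ} (hpq : p ≤ q) (ht : t ≤ p) : ramp p q t = 0 := by
  simp [ramp, min_eq_left (ht.trans hpq), ht]

lemma ramp_of_ge {p q t : ℝ} (hpq : p ≤ q) (ht : q ≤ t) : ramp p q t = q - p := by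
  simp [ramp, ht, hpq]

lemma ramp_of_mem_Icc {p q t : ℝ} (ht : t ∈ Icc p q) : ramp p q t = t - p := by
  simp [ramp, ht.1, ht.2]

lemma ramp_mono (p q : ℝ) : Monotone (ramp p q) :=
  fun _ _ h => sub_le_sub_right (max_le_max_right _ (min_le_min_right _ h)) _

lemma ramp_lt_ramp {p q t t' : ℝ} (ht : t ∈ Ico p q) (htt' : t < t') :
    ramp p q t < ramp p q t' := by
  rw [ramp_of_mem_Icc (Ico_subset_Icc_self ht)]
  exact sub_lt_sub_right (lt_max_of_lt_left (lt_min htt' ht.2)) p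

/-- The piecewise linear function through the points `(a m, b m)`, `m ≤ k`, with slope `1`
outside `[a 0, a k]`. -/
noncomputable def linearInterp (k : ℕ) (a b : ℕ → ℝ) (t : ℝ) : ℝ :=
  b 0 + (min t (a 0) - a 0)
    + ∑ m ∈ Finset.range k, (b (m + 1) - b m) / (a (m + 1) - a m) * ramp (a m) (a (m + 1)) t
    + (max t (a k) - a k)

lemma continuous_linearInterp (k : ℕ) (a b : ℕ → ℝ) : Continuous (linearInterp k a b) := by
  unfold linearInterp ramp
  fun_prop

variable {k : ℕ} {a b : ℕ → ℝ} (ha : ∀ m < k, a m < a (m + 1))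
include ha

lemma sum_ramp_of_ge {m : ℕ} (hm : m ≤ k) {t : ℝ} (ht : a m ≤ t) :
    ∑ j ∈ Finset.range m, (b (j + 1) - b j) / (a (j + 1) - a j) * ramp (a j) (a (j + 1)) t
      = b m - b 0 := by
  have hmono := (strictMonoOn_Iic_of_lt_succ ha).monotoneOn
  rw [← Finset.sum_range_sub]
  refine Finset.sum_congr rfl fun j hj => ?_
  have hj := Finset.mem_range.1 hj
  rw [ramp_of_ge (ha j (hj.trans_le hm)).le ((hmono (Nat.succ_le_of_lt hj |>.trans hm)
    hm hj).trans ht), div_mul_cancel₀ _ (sub_pos.2 (ha j (hj.trans_le hm))).ne']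

lemma sum_Ico_ramp_of_le {m : ℕ} {t : ℝ} (ht : t ≤ a m) :
    ∑ j ∈ Finset.Ico m k, (b (j + 1) - b j) / (a (j + 1) - a j) * ramp (a j) (a (j + 1)) t
      = 0 := by
  have hmono := (strictMonoOn_Iic_of_lt_succ ha).monotoneOn
  refine Finset.sum_eq_zero fun j hj => ?_
  obtain ⟨hmj, hjk⟩ := Finset.mem_Ico.1 hj
  rw [ramp_of_le (ha j hjk).le (ht.trans (hmono (hmj.trans hjk.le) hjk.le hmj)), mul_zero]

lemma linearInterp_of_mem_Icc {m : ℕ} (hm : m < k) {t : ℝ} (ht : t ∈ Icc (a m) (a (m + 1))) :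
    linearInterp k a b t = b m + (b (m + 1) - b m) / (a (m + 1) - a m) * (t - a m) := by
  have hmono := (strictMonoOn_Iic_of_lt_succ ha).monotoneOn
  have h0 : a 0 ≤ t := (hmono (Nat.zero_le _) hm.le (Nat.zero_le m)).trans ht.1
  have hk : t ≤ a k := ht.2.trans (hmono hm (le_refl k) hm)
  rw [linearInterp, min_eq_right h0, max_eq_right hk, ← Finset.sum_range_add_sum_Ico _ hm,
    Finset.sum_range_succ, sum_ramp_of_ge ha hm.le ht.1, sum_Ico_ramp_of_le ha ht.2,
    ramp_of_mem_Icc ht]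
  ring

lemma linearInterp_of_ge {t : ℝ} (ht : a k ≤ t) : linearInterp k a b t = b k + (t - a k) := by
  have hmono := (strictMonoOn_Iic_of_lt_succ ha).monotoneOn
  rw [linearInterp, min_eq_right ((hmono (Nat.zero_le k) (le_refl k) (Nat.zero_le k)).trans ht),
    max_eq_left ht, sum_ramp_of_ge ha le_rfl ht]
  ring

lemma linearInterp_node {m : ℕ} (hm : m ≤ k) : linearInterp k a b (a m) = b m := by
  rcases hm.lt_or_eq with hm | rfl
  · simp [linearInterp_of_mem_Icc ha hm ⟨le_rfl, (ha m hm).le⟩]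
  · simp [linearInterp_of_ge ha le_rfl]

lemma strictMono_linearInterp (hb : ∀ m < k, b m < b (m + 1)) :
    StrictMono (linearInterp k a b) := by
  have hslope : ∀ m < k, 0 < (b (m + 1) - b m) / (a (m + 1) - a m) :=
    fun m hm => div_pos (sub_pos.2 (hb m hm)) (sub_pos.2 (ha m hm))
  intro t t' htt'
  have hmin : min t (a 0) ≤ min t' (a 0) := min_le_min_right _ htt'.le
  have hmax : max t (a k) ≤ max t' (a k) := max_le_max_right _ htt'.le
  have hsum : ∀ j ∈ Finset.range k,
      (b (j + 1) - b j) / (a (j + 1) - a j) * ramp (a j) (a (j + 1)) t ≤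
        (b (j + 1) - b j) / (a (j + 1) - a j) * ramp (a j) (a (j + 1)) t' :=
    fun j hj => mul_le_mul_of_nonneg_left (ramp_mono _ _ htt'.le)
      (hslope j (Finset.mem_range.1 hj)).le
  unfold linearInterp
  rcases lt_or_ge t (a 0) with h0 | h0
  · have : min t (a 0) < min t' (a 0) := by rw [min_eq_left h0.le]; exact lt_min htt' h0
    linarith [Finset.sum_le_sum hsum]
  rcases le_or_gt (a k) t with hk | hk
  · have : max t (a k) < max t' (a k) := by rw [max_eq_left hk]; exact lt_max_of_lt_left htt'
    linarith [Finset.sum_le_sum hsum]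
  obtain ⟨m, hm, hmt⟩ := exists_mem_Ico_succ ⟨h0, hk⟩
  linarith [Finset.sum_lt_sum hsum ⟨m, Finset.mem_range.2 hm,
    mul_lt_mul_of_pos_left (ramp_lt_ramp hmt htt') (hslope m hm)⟩]

lemma abs_linearInterp_sub_le {D : ℝ} (hD : ∀ m ≤ k, |b m - a m| ≤ D) {t : ℝ}
    (ht : t ∈ Icc (a 0) (a k)) : |linearInterp k a b t - t| ≤ D := by
  rcases ht.2.eq_or_lt with rfl | htk
  · simpa [linearInterp_node ha le_rfl] using hD k le_rfl
  obtain ⟨m, hm, hmt, htm⟩ := exists_mem_Ico_succ ⟨ht.1, htk⟩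
  have hgap : 0 < a (m + 1) - a m := sub_pos.2 (ha m hm)
  set θ := (t - a m) / (a (m + 1) - a m) with hθ
  have hθ0 : 0 ≤ θ := div_nonneg (sub_nonneg.2 hmt) hgap.le
  have hθ1 : θ ≤ 1 := (div_le_one hgap).2 (by linarith)
  have hcomb : linearInterp k a b t - t = (1 - θ) * (b m - a m) + θ * (b (m + 1) - a (m + 1)) := by
    rw [linearInterp_of_mem_Icc ha hm ⟨hmt, htm.le⟩, hθ]
    field_simp
    ring
  obtain ⟨h1, h2⟩ := abs_le.1 (hD m hm.le)
  obtain ⟨h3, h4⟩ := abs_le.1 (hD (m + 1) hm)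
  rw [hcomb, abs_le]
  constructor <;> nlinarith

end LinearInterp

lemma exists_isTimeChange_map_nodes {k : ℕ} {a b : ℕ → ℝ≥0} (ha : ∀ m < k, a m < a (m + 1))
    (hb : ∀ m < k, b m < b (m + 1)) (ha0 : a 0 = 0) (hb0 : b 0 = 0) {D : ℝ}
    (hD : ∀ m ≤ k, |(b m : ℝ) - a m| ≤ D) :
    ∃ φ, IsTimeChange φ ∧ (∀ m ≤ k, φ (a m) = b m) ∧ ∀ t ≤ a k, |(φ t : ℝ) - t| ≤ D := by
  have ha' : ∀ m < k, (a m : ℝ) < a (m + 1) := fun m hm => ha m hm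
  have hb' : ∀ m < k, (b m : ℝ) < b (m + 1) := fun m hm => hb m hm
  set F := linearInterp k (fun m => (a m : ℝ)) (fun m => b m)
  have hF : StrictMono F := strictMono_linearInterp ha' hb'
  have hnode : ∀ m ≤ k, F (a m) = b m := fun m hm => linearInterp_node ha' hm
  have hF0 : F 0 = 0 := by simpa [ha0, hb0] using hnode 0 (Nat.zero_le k)
  have hFnn (t : ℝ≥0) : 0 ≤ F t := hF0 ▸ hF.monotone t.2
  refine ⟨fun t => ⟨F t, hFnn t⟩, ⟨?_, fun s t hst => hF hst, NNReal.eq hF0, ?_⟩,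
    fun m hm => NNReal.eq (hnode m hm), fun t ht => ?_⟩
  · exact ((continuous_linearInterp _ _ _).comp NNReal.continuous_coe).subtype_mk _
  · refine NNReal.tendsto_coe_atTop.1 (tendsto_atTop_add_const_right _ ((b k : ℝ) - a k)
      (NNReal.tendsto_coe_atTop.2 tendsto_id) |>.congr' ?_)
    filter_upwards [eventually_ge_atTop (a k)] with t ht
    change _ = F t
    simp only [id, F, linearInterp_of_ge ha' (NNReal.coe_le_coe.2 ht)]
    ring
  · exact abs_linearInterp_sub_le ha' hD ⟨by simp [ha0], NNReal.coe_le_coe.2 ht⟩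

section Jumps

variable {E : Type*} [MetricSpace E] {f : ℝ≥0 → E} {ε : ℝ}

lemma Cadlag.dist_le_of_oscLE_Ico (hf : Cadlag f) {a b : ℝ≥0} (hosc : OscLE f (Ico a b) ε)
    (hb : Function.leftLim f b = f b) {u : ℝ≥0} (hu : u ∈ Ico a b) : dist (f u) (f b) ≤ ε := by
  obtain ⟨l, hl⟩ := (hf b).2
  have : (𝓝[<] b).NeBot := nhdsLT_neBot_of_exists_lt ⟨a, hu.1.trans_lt hu.2⟩
  rw [← hb, leftLim_eq_of_tendsto hl]
  exact le_of_tendsto (tendsto_const_nhds.dist hl) <|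
    eventually_mem_set.2 (Ico_mem_nhdsLT (hu.1.trans_lt hu.2)) |>.mono fun v hv => hosc u hu v hv

variable {τ : ℕ → ℝ≥0} {k : ℕ}

lemma IsOscGrid.dist_le_of_forall_jump_iff (hf : Cadlag f) (hG : IsOscGrid f ε τ k) {g : ℝ}
    (hg : ∀ m < k, g ≤ (τ (m + 1) : ℝ) - τ m) {s t : ℝ≥0} (hs : s < τ k) (ht : t < τ k)
    (hst : |(s : ℝ) - t| < g)
    (hjump : ∀ m < k, Function.leftLim f (τ m) ≠ f (τ m) → (τ m ≤ s ↔ τ m ≤ t)) :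
    dist (f s) (f t) ≤ 2 * ε := by
  wlog hle : s ≤ t generalizing s t
  · rw [dist_comm]
    exact this ht hs (by rwa [abs_sub_comm]) (fun m hm h => (hjump m hm h).symm)
      (le_of_not_ge hle)
  obtain ⟨m, hm, hmt⟩ := exists_mem_Ico_succ ⟨hG.zero ▸ zero_le, ht⟩
  have hε : 0 ≤ ε := dist_self (f t) ▸ hG.oscLE m hm t hmt t hmt
  by_cases hms : τ m ≤ s
  · linarith [hG.oscLE m hm s ⟨hms, hle.trans_lt hmt.2⟩ t hmt]
  -- `s` lies in the previous cell, and `f` has no jump at the node `τ m` between `s` and `t`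
  rw [not_le] at hms
  have hcont : Function.leftLim f (τ m) = f (τ m) := by
    by_contra h
    exact hms.not_ge ((hjump m hm h).2 hmt.1)
  obtain ⟨m, rfl⟩ : ∃ m', m = m' + 1 :=
    Nat.exists_eq_succ_of_ne_zero fun h => by simp [h, hG.zero] at hms
  have hs' : τ m ≤ s := by
    have := hg m (by omega)
    have : (τ (m + 1) : ℝ) ≤ t := hmt.1
    rw [abs_lt] at hst
    exact_mod_cast (by linarith : (τ m : ℝ) ≤ s)
  calc dist (f s) (f t) ≤ dist (f s) (f (τ (m + 1))) + dist (f (τ (m + 1))) (f t) :=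
        dist_triangle _ _ _
    _ ≤ ε + ε := add_le_add (hf.dist_le_of_oscLE_Ico (hG.oscLE m (by omega)) hcont ⟨hs', hms⟩)
        (hG.oscLE _ hm _ ⟨le_rfl, hG.lt_succ _ hm⟩ t hmt)
    _ = 2 * ε := by ring

lemma IsOscGrid.dist_comp_timeChange_lt (hf : Cadlag f) (hG : IsOscGrid f ε τ k) {δ : ℝ}
    (hgap : ∀ m < k, 2 * δ ≤ (τ (m + 1) : ℝ) - τ m) {x : ℝ≥0 → E} {L Λ : ℝ≥0 → ℝ≥0}
    (hL : IsTimeChange L) (hLx : ∀ s ∈ Icc 0 (τ k), dist (x (L s)) (f s) < δ ∧ |(L s : ℝ) - s| < δ)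
    (hΛ : StrictMono Λ) (hΛL : ∀ m < k, Function.leftLim f (τ m) ≠ f (τ m) → Λ (τ m) = L (τ m))
    {t : ℝ≥0} (ht : (t : ℝ) + 2 * δ ≤ τ k) (hΛt : |(Λ t : ℝ) - t| ≤ δ) :
    dist (x (Λ t)) (f t) < δ + 2 * ε := by
  obtain ⟨s, hs⟩ := hL.surjective (Λ t)
  have hLk := abs_lt.1 (hLx (τ k) ⟨zero_le, le_rfl⟩).2
  have hsk : s < τ k := by
    refine hL.strictMono.lt_iff_lt.1 (NNReal.coe_lt_coe.1 ?_)
    rw [hs]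
    linarith [abs_le.1 hΛt]
  have htk : t < τ k := by exact_mod_cast (by linarith : (t : ℝ) < τ k)
  have hLs := hLx s ⟨zero_le, hsk.le⟩
  have hst : |(s : ℝ) - t| < 2 * δ := by
    rw [hs] at hLs
    rw [abs_lt] at hLs ⊢
    constructor <;> linarith [abs_le.1 hΛt, hLs.2.1, hLs.2.2]
  have hjump : ∀ m < k, Function.leftLim f (τ m) ≠ f (τ m) → (τ m ≤ s ↔ τ m ≤ t) :=
    fun m hm h => by rw [← hL.strictMono.le_iff_le, ← hΛL m hm h, hs, hΛ.le_iff_le]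
  calc dist (x (Λ t)) (f t) ≤ dist (x (L s)) (f s) + dist (f s) (f t) := by
        rw [hs]; exact dist_triangle _ _ _
    _ < δ + 2 * ε := add_lt_add_of_lt_of_le hLs.1
        (hG.dist_le_of_forall_jump_iff hf hgap hsk htk hst hjump)

end Jumps

lemma exists_mem_insert_range_forall {ι α : Type*} {p : ι → Prop}
    (hp : ∀ i j, p i → p j → i = j) (v : ι → α) (a : α) :
    ∃ c ∈ insert a (range v), ∀ i, p i → c = v i := by
  by_cases h : ∃ i, p i
  · obtain ⟨i, hi⟩ := h
    exact ⟨v i, mem_insert_of_mem _ (mem_range_self i), fun j hj => by rw [hp i j hi hj]⟩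
  · exact ⟨a, mem_insert _ _, fun i hi => (h ⟨i, hi⟩).elim⟩

lemma exists_pos_lt_two_mul_le_sub {τ : ℕ → ℝ≥0} {k : ℕ} (hτ : ∀ m < k, τ m < τ (m + 1))
    {c : ℝ} (hc : 0 < c) : ∃ δ : ℝ, 0 < δ ∧ δ < c ∧ ∀ m < k, 2 * δ ≤ (τ (m + 1) : ℝ) - τ m := by
  have hsmall : ∀ᶠ δ in 𝓝 (0 : ℝ), δ < c ∧ ∀ m ∈ Iio k, 2 * δ ≤ (τ (m + 1) : ℝ) - τ m :=
    (eventually_lt_nhds hc).and <| (eventually_all_finite (finite_Iio k)).2 fun m hm =>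
      (eventually_lt_nhds (half_pos (sub_pos.2 (NNReal.coe_lt_coe.2 (hτ m hm))))).mono
        fun δ h => by linarith
  obtain ⟨δ, ⟨hδc, hgap⟩, hδ⟩ := ((hsmall.filter_mono nhdsWithin_le_nhds).and
    (self_mem_nhdsWithin : Ioi (0 : ℝ) ∈ 𝓝[>] 0)).exists
  exact ⟨δ, hδ, hδc, hgap⟩

lemma exists_isTimeChange_eq_at_nodes {ι : Type*} {τ : ℕ → ℝ≥0} {k : ℕ}
    (hτ : ∀ m < k, τ m < τ (m + 1)) (hτ0 : τ 0 = 0) {δ : ℝ} (hδ : 0 < δ)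
    (hgap : ∀ m < k, 2 * δ ≤ (τ (m + 1) : ℝ) - τ m) {L : ι → ℝ≥0 → ℝ≥0} (hL0 : ∀ i, L i 0 = 0)
    (hLτ : ∀ i, ∀ m ≤ k, |(L i (τ m) : ℝ) - τ m| < δ) {p : ℕ → ι → Prop}
    (hp : ∀ m i j, p m i → p m j → i = j) :
    ∃ Λ, IsTimeChange Λ ∧ (∀ m ≤ k, ∀ i, p m i → Λ (τ m) = L i (τ m)) ∧
      ∀ t ≤ τ k, |(Λ t : ℝ) - t| ≤ δ := by
  choose b hb hbL using fun m => exists_mem_insert_range_forall (hp m) (fun i => L i (τ m)) (τ m)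
  have hbτ : ∀ m ≤ k, |(b m : ℝ) - τ m| < δ := fun m hm => by
    rcases hb m with h | ⟨i, h⟩
    · simpa [h] using hδ
    · exact h ▸ hLτ i m hm
  have hb0 : b 0 = 0 := by
    rcases hb 0 with h | ⟨i, h⟩
    · rw [h, hτ0]
    · rw [← h, hτ0]
      exact hL0 i
  have hbmono : ∀ m < k, b m < b (m + 1) := fun m hm => by
    have := hgap m hm
    have := abs_lt.1 (hbτ m hm.le)
    have := abs_lt.1 (hbτ (m + 1) hm)
    exact_mod_cast (by linarith : (b m : ℝ) < b (m + 1))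
  obtain ⟨Λ, hΛ, hΛb, hΛτ⟩ :=
    exists_isTimeChange_map_nodes hτ hbmono hτ0 hb0 fun m hm => (hbτ m hm).le
  exact ⟨Λ, hΛ, fun m hm i hi => (hΛb m hm).trans (hbL m i hi), hΛτ⟩

theorem eventually_exists_common_timeChange {d : ℕ} {x : ℕ → Fin d → ℝ≥0 → ℝ}
    {y : Fin d → ℝ≥0 → ℝ} (hy : ∀ i, Cadlag (y i))
    (hnojump : ∀ (t : ℝ≥0) (i j : Fin d), i ≠ j → jumpAt (y i) t * jumpAt (y j) t = 0)
    (hconv : ∀ i, J1Tendsto (fun n => x n i) (y i)) (T : ℝ≥0) {ε : ℝ} (hε : 0 < ε) :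
    ∀ᶠ n in atTop, ∃ Λ, IsTimeChange Λ ∧ ∀ t ∈ Icc 0 T,
      ‖(fun i => x n i (Λ t)) - fun i => y i t‖ < ε ∧ |(Λ t : ℝ) - t| < ε := by
  obtain ⟨k, τ, hG, hτk⟩ := (Cadlag.pi hy).exists_isOscGrid (by positivity : 0 < ε / 4) (T + 1)
  obtain ⟨δ, hδ, hδc, hgap⟩ :=
    exists_pos_lt_two_mul_le_sub hG.lt_succ (by positivity : 0 < min (ε / 4) (1 / 2))
  have hδε : δ < ε / 4 := hδc.trans_le (min_le_left _ _)
  have hδ1 : δ < 1 / 2 := hδc.trans_le (min_le_right _ _)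
  have hτT : ∀ m ≤ k, τ m ∈ Icc 0 (T + 1) :=
    fun m hm => ⟨zero_le, hτk ▸ hG.monotoneOn hm (le_refl k) hm⟩
  filter_upwards [eventually_all.2 fun i =>
    j1Tendsto_iff.1 (hconv i) (T + 1) (by positivity) δ hδ] with n hn
  choose L hL hLy using hn
  have hunique : ∀ m i j, jumpAt (y i) (τ m) ≠ 0 → jumpAt (y j) (τ m) ≠ 0 → i = j :=
    fun m i j hi hj => by_contra fun hij => mul_ne_zero hi hj (hnojump _ i j hij)
  obtain ⟨Λ, hΛ, hΛL, hΛt⟩ := exists_isTimeChange_eq_at_nodes hG.lt_succ hG.zero hδ hgap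
    (fun i => (hL i).map_zero) (fun i m hm => (hLy i _ (hτT m hm)).2) hunique
  refine ⟨Λ, hΛ, fun t ht => ?_⟩
  have htk : (t : ℝ) + 2 * δ ≤ τ k := by
    rw [hτk]; push_cast; linarith [NNReal.coe_le_coe.2 ht.2]
  have hΛt' : |(Λ t : ℝ) - t| ≤ δ := hΛt t (by exact_mod_cast (by linarith : (t : ℝ) ≤ τ k))
  refine ⟨(pi_norm_lt_iff hε).2 fun i => ?_, by linarith⟩
  rw [Pi.sub_apply, ← dist_eq_norm]
  have := (hG.apply i).dist_comp_timeChange_lt (hy i) hgap (hL i)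
    (fun s hs => by simpa [dist_eq_norm] using hLy i s (hτk ▸ hs)) hΛ.strictMono
    (fun m hm h => hΛL m hm.le i (sub_ne_zero.2 h.symm)) htk hΛt'
  linarith

theorem stmt5_general
    (d : ℕ)
    (x : ℕ → Fin d → ℝ≥0 → ℝ) (y : Fin d → ℝ≥0 → ℝ)
    (hycad : ∀ i, Cadlag (y i))
    (hconv : ∀ i, J1Tendsto (fun n => x n i) (y i))
    (hnojump : ∀ (t : ℝ≥0) (i j : Fin d), i ≠ j → jumpAt (y i) t * jumpAt (y j) t = 0) :
    J1Tendsto (E := Fin d → ℝ) (fun n t i => x n i t) (fun t i => y i t) :=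
  j1Tendsto_iff.2 fun T _ _ hε =>
    eventually_exists_common_timeChange hycad hnojump hconv T hε

/-- If `x_n^{(i)} → x^{(i)}` in the J₁-topology on `D([0,∞),ℝ)`
for each `1 ≤ i ≤ d`, and the limits have no common jump times
(`Δx^{(i)}(t)·Δx^{(j)}(t) = 0` for `i ≠ j`), then the vector-valued paths
converge in the J₁-topology on `D([0,∞),ℝ^d)`. -/
theorem stmt5
    (d : ℕ)
    (x : ℕ → Fin d → ℝ≥0 → ℝ) (y : Fin d → ℝ≥0 → ℝ)
    (hxcad : ∀ n i, Cadlag (x n i)) (hycad : ∀ i, Cadlag (y i))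
    (hconv : ∀ i, J1Tendsto (fun n => x n i) (y i))
    (hnojump : ∀ (t : ℝ≥0) (i j : Fin d), i ≠ j → jumpAt (y i) t * jumpAt (y j) t = 0) :
    J1Tendsto (E := Fin d → ℝ) (fun n t i => x n i t) (fun t i => y i t) :=
  stmt5_general d x y hycad hconv hnojump
end

section
/- Let α_n, α, β_n, β ∈ D([0,∞),ℝ) with α_n → α and β_n → β in the J₁-topology, and suppose α and β have no common jump times. Then for every t ≥ 0 there exists a sequence t_n → t such that Δα_n(t_n) → Δα(t) and Δβ_n(t_n) → Δβ(t). -/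
/-!
At `t = 0` every jump vanishes; at `t > 0` one of `Δα(t)`, `Δβ(t)` vanishes, say `Δβ(t) = 0`.
Pick time changes `λₙ` for `αₙ → α` and `μₙ` for `βₙ → β`, so that `αₙ ∘ λₙ → α` and
`βₙ ∘ μₙ → β` uniformly on `[0, t + 1]`; uniform convergence passes to left limits, hence to
jumps. Put `tₙ = λₙ t`: then `Δαₙ(tₙ) = Δ(αₙ ∘ λₙ)(t) → Δα(t)`. With `rₙ = μₙ⁻¹ tₙ → t`,
`Δβₙ(tₙ) = Δ(βₙ ∘ μₙ)(rₙ)` is uniformly close to `Δβ(rₙ)`, which tends to `0` because `β` is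
continuous at `t`, so that `Δβ` is continuous at `t` as well.
-/

open Filter Set
open scoped NNReal Topology

open Function

section LeftLim

variable {α β γ : Type*} [LinearOrder α] [TopologicalSpace α] [OrderTopology α]
  [LinearOrder β] [TopologicalSpace β] [OrderTopology β] [TopologicalSpace γ] [T2Space γ]

theorem OrderIso.map_nhdsLT (e : α ≃o β) (a : α) : map e (𝓝[<] a) = 𝓝[<] (e a) := by
  rw [← e.image_Iio]
  exact e.toHomeomorph.isEmbedding.map_nhdsWithin_eq (Iio a) a

theorem Function.leftLim_comp_orderIso (f : β → γ) (e : α ≃o β) (a : α) :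
    leftLim (f ∘ e) a = leftLim f (e a) := by
  have hmap := e.map_nhdsLT a
  rcases eq_or_neBot (𝓝[<] a) with hbot | hne
  · rw [leftLim_eq_of_eq_bot _ hbot, leftLim_eq_of_eq_bot _ (by rw [← hmap, hbot, map_bot])]
    rfl
  have : (𝓝[<] (e a)).NeBot := hmap ▸ hne.map _
  by_cases hlim : ∃ y, Tendsto f (𝓝[<] (e a)) (𝓝 y)
  · apply leftLim_eq_of_tendsto
    rw [← tendsto_map'_iff, hmap]
    exact tendsto_leftLim_of_tendsto hlim
  · rw [leftLim_eq_of_not_tendsto f hlim, leftLim_eq_of_not_tendsto]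
    · rfl
    · simpa only [← tendsto_map'_iff, hmap] using hlim

end LeftLim

theorem jumpAt_zero (f : ℝ≥0 → ℝ) : jumpAt f 0 = 0 := by
  rw [jumpAt, leftLim_eq_of_isBot (show IsBot (0 : ℝ≥0) from isBot_bot), sub_self]

theorem jumpAt_comp_orderIso (f : ℝ≥0 → ℝ) (e : ℝ≥0 ≃o ℝ≥0) (t : ℝ≥0) :
    jumpAt (f ∘ e) t = jumpAt f (e t) := by
  rw [jumpAt, jumpAt, leftLim_comp_orderIso]
  rfl

namespace Cadlag

section Topological

variable {E : Type*} [TopologicalSpace E] {f : ℝ≥0 → E}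

theorem tendsto_leftLim (hf : Cadlag f) (t : ℝ≥0) :
    Tendsto f (𝓝[<] t) (𝓝 (leftLim f t)) :=
  tendsto_leftLim_of_tendsto (hf t).2

theorem comp_orderIso (hf : Cadlag f) (e : ℝ≥0 ≃o ℝ≥0) : Cadlag (f ∘ e) := fun t =>
  ⟨(hf (e t)).1.comp e.continuous.continuousWithinAt fun _ hs => e.monotone hs,
    _, (hf.tendsto_leftLim (e t)).comp (e.map_nhdsLT t).le⟩

theorem tendsto_leftLim_nhds [RegularSpace E] (hf : Cadlag f) {t : ℝ≥0}
    (hcont : ContinuousAt f t) : Tendsto (leftLim f) (𝓝 t) (𝓝 (f t)) := by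
  refine (closed_nhds_basis (f t)).tendsto_right_iff.2 fun V ⟨hV, hVc⟩ => ?_
  filter_upwards [eventually_eventually_nhds.2 (hcont hV)] with s hs
  rcases eq_or_neBot (𝓝[<] s) with hbot | hne
  · rw [leftLim_eq_of_eq_bot f hbot]
    exact hs.self_of_nhds
  · exact hVc.mem_of_tendsto (hf.tendsto_leftLim s) (eventually_nhdsWithin_of_eventually_nhds hs)

end Topological

theorem tendsto_jumpAt_of_jumpAt_eq_zero {f : ℝ≥0 → ℝ} (hf : Cadlag f) {t : ℝ≥0}
    (ht : jumpAt f t = 0) : Tendsto (jumpAt f) (𝓝 t) (𝓝 0) := by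
  have hleft : leftLim f t = f t := (sub_eq_zero.1 ht).symm
  have hcont : ContinuousAt f t := continuousAt_iff_continuous_left_right.2
    ⟨continuousWithinAt_Iio_iff_Iic.1 (hleft ▸ hf.tendsto_leftLim t :), (hf t).1⟩
  have := hcont.tendsto.sub (hf.tendsto_leftLim_nhds hcont)
  rwa [sub_self] at this

theorem dist_leftLim_le {E : Type*} [MetricSpace E] {f g : ℝ≥0 → E} (hf : Cadlag f)
    (hg : Cadlag g) {T r : ℝ≥0} {ε : ℝ} (h : ∀ s ≤ T, dist (f s) (g s) ≤ ε) (hr : r ≤ T) :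
    dist (leftLim f r) (leftLim g r) ≤ ε := by
  rcases eq_or_neBot (𝓝[<] r) with hbot | hne
  · rw [leftLim_eq_of_eq_bot f hbot, leftLim_eq_of_eq_bot g hbot]
    exact h r hr
  · refine le_of_tendsto ((hf.tendsto_leftLim r).dist (hg.tendsto_leftLim r)) ?_
    filter_upwards [self_mem_nhdsWithin] with s hs using h s (hs.le.trans hr)

theorem dist_jumpAt_le {f g : ℝ≥0 → ℝ} (hf : Cadlag f) (hg : Cadlag g) {T r : ℝ≥0} {ε : ℝ}
    (h : ∀ s ≤ T, dist (f s) (g s) ≤ ε) (hr : r ≤ T) :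
    dist (jumpAt f r) (jumpAt g r) ≤ 2 * ε := by
  calc dist (jumpAt f r) (jumpAt g r)
      ≤ dist (f r) (g r) + dist (leftLim f r) (leftLim g r) := dist_sub_sub_le _ _ _ _
    _ ≤ ε + ε := add_le_add (h r hr) (dist_leftLim_le hf hg h hr)
    _ = 2 * ε := by ring

end Cadlag

theorem tendsto_dist_jumpAt_of_tendstoUniformlyOn {ι : Type*} {l : Filter ι}
    {F : ι → ℝ≥0 → ℝ} {f : ℝ≥0 → ℝ} (hF : ∀ i, Cadlag (F i)) (hf : Cadlag f) {T : ℝ≥0}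
    (h : TendstoUniformlyOn F f l (Iic T)) {r : ι → ℝ≥0} (hr : ∀ᶠ i in l, r i ≤ T) :
    Tendsto (fun i => dist (jumpAt f (r i)) (jumpAt (F i) (r i))) l (𝓝 0) := by
  rw [Metric.tendstoUniformlyOn_iff] at h
  refine Metric.tendsto_nhds.2 fun ε hε => ?_
  filter_upwards [h (ε / 3) (by positivity), hr] with i hi hri
  rw [Real.dist_0_eq_abs, abs_of_nonneg dist_nonneg]
  calc dist (jumpAt f (r i)) (jumpAt (F i) (r i))
      ≤ 2 * (ε / 3) := Cadlag.dist_jumpAt_le hf (hF i) (fun s hs => (hi s hs).le) hri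
    _ < ε := by linarith

section TimeChange

variable {lam : ℕ → ℝ≥0 ≃o ℝ≥0} {T t : ℝ≥0} {s : ℕ → ℝ≥0}

theorem eventually_orderIso_symm_apply_le
    (h : TendstoUniformlyOn (fun n => ⇑(lam n)) id atTop (Iic T)) (htT : t < T)
    (hs : Tendsto s atTop (𝓝 t)) : ∀ᶠ n in atTop, (lam n).symm (s n) ≤ T := by
  filter_upwards [hs.eventually_lt (h.tendsto_at self_mem_Iic) htT] with n hn
  exact ((lam n).symm_apply_lt.2 hn).le

theorem tendsto_orderIso_symm_apply
    (h : TendstoUniformlyOn (fun n => ⇑(lam n)) id atTop (Iic T)) (htT : t < T)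
    (hs : Tendsto s atTop (𝓝 t)) : Tendsto (fun n => (lam n).symm (s n)) atTop (𝓝 t) := by
  have hmem : Tendsto (fun n => (n, (lam n).symm (s n))) atTop (atTop ×ˢ 𝓟 (Iic T)) :=
    tendsto_id.prodMk (tendsto_principal.2 (eventually_orderIso_symm_apply_le h htT hs))
  have hclose := (tendstoUniformlyOn_iff_tendsto.1 h).comp hmem
  simp only [comp_def, id, OrderIso.apply_symm_apply] at hclose
  exact (Uniform.tendsto_congr hclose).2 hs

end TimeChange

namespace J1Tendsto

theorem exists_orderIso {E : Type*} [NormedAddCommGroup E] {x : ℕ → ℝ≥0 → E}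
    {y : ℝ≥0 → E} (h : J1Tendsto x y) {T : ℝ≥0} (hT : 0 < T) :
    ∃ lam : ℕ → ℝ≥0 ≃o ℝ≥0, TendstoUniformlyOn (fun n => x n ∘ lam n) y atTop (Iic T) ∧
      TendstoUniformlyOn (fun n => ⇑(lam n)) id atTop (Iic T) := by
  obtain ⟨lam, hlam, hconv⟩ := h T hT
  have hsurj : ∀ n, Surjective (lam n) := fun n p =>
    mem_range_of_exists_le_of_exists_ge (hlam n).1 ⟨0, by rw [(hlam n).2.2.1]; exact zero_le⟩
      ((hlam n).2.2.2.eventually (eventually_ge_atTop p)).exists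
  refine ⟨fun n => (hlam n).2.1.orderIsoOfSurjective _ (hsurj n), ?_, ?_⟩ <;>
    refine Metric.tendstoUniformlyOn_iff.2 fun ε hε => ?_ <;>
    filter_upwards [hconv ε hε] with n hn s hs
  · rw [dist_comm, dist_eq_norm]
    exact (hn s ⟨zero_le, hs⟩).1
  · rw [dist_comm, NNReal.dist_eq]
    exact (hn s ⟨zero_le, hs⟩).2

variable {x : ℕ → ℝ≥0 → ℝ} {y : ℝ≥0 → ℝ}

theorem exists_tendsto_jumpAt (h : J1Tendsto x y) (hx : ∀ n, Cadlag (x n)) (hy : Cadlag y)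
    (t : ℝ≥0) : ∃ tn : ℕ → ℝ≥0, Tendsto tn atTop (𝓝 t) ∧
      Tendsto (fun n => jumpAt (x n) (tn n)) atTop (𝓝 (jumpAt y t)) := by
  obtain ⟨lam, hxlam, hlam⟩ := h.exists_orderIso (T := t + 1) (by positivity)
  have hdist := tendsto_dist_jumpAt_of_tendstoUniformlyOn (fun n => (hx n).comp_orderIso (lam n))
    hy hxlam (r := fun _ => t) (Eventually.of_forall fun _ => le_self_add)
  refine ⟨fun n => lam n t, hlam.tendsto_at (mem_Iic.2 le_self_add), ?_⟩
  simpa only [jumpAt_comp_orderIso] using tendsto_const_nhds.congr_dist hdist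

theorem tendsto_jumpAt_of_jumpAt_eq_zero (h : J1Tendsto x y) (hx : ∀ n, Cadlag (x n))
    (hy : Cadlag y) {t : ℝ≥0} (ht : jumpAt y t = 0) {s : ℕ → ℝ≥0}
    (hs : Tendsto s atTop (𝓝 t)) : Tendsto (fun n => jumpAt (x n) (s n)) atTop (𝓝 0) := by
  obtain ⟨lam, hxlam, hlam⟩ := h.exists_orderIso (T := t + 1) (by positivity)
  have htT : t < t + 1 := lt_add_one t
  have hdist := tendsto_dist_jumpAt_of_tendstoUniformlyOn (fun n => (hx n).comp_orderIso (lam n))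
    hy hxlam (eventually_orderIso_symm_apply_le hlam htT hs)
  have hjump : Tendsto (fun n => jumpAt y ((lam n).symm (s n))) atTop (𝓝 0) :=
    (hy.tendsto_jumpAt_of_jumpAt_eq_zero ht).comp (tendsto_orderIso_symm_apply hlam htT hs)
  simpa only [jumpAt_comp_orderIso, OrderIso.apply_symm_apply] using hjump.congr_dist hdist

end J1Tendsto

/-- If `α_n → α` and `β_n → β` in the J₁-topology and `α, β`
have no common jump times, then for every `t ≥ 0` there exists `t_n → t` with
`Δα_n(t_n) → Δα(t)` and `Δβ_n(t_n) → Δβ(t)`. -/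
theorem stmt6
    (a : ℕ → ℝ≥0 → ℝ) (alim : ℝ≥0 → ℝ) (b : ℕ → ℝ≥0 → ℝ) (blim : ℝ≥0 → ℝ)
    (hacad : ∀ n, Cadlag (a n)) (halim : Cadlag alim)
    (hbcad : ∀ n, Cadlag (b n)) (hblim : Cadlag blim)
    (hJa : J1Tendsto a alim) (hJb : J1Tendsto b blim)
    (hnojump : ∀ t : ℝ≥0, 0 < t → jumpAt alim t * jumpAt blim t = 0) :
    ∀ t : ℝ≥0, ∃ tn : ℕ → ℝ≥0,
      Tendsto tn atTop (𝓝 t) ∧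
      Tendsto (fun n => jumpAt (a n) (tn n)) atTop (𝓝 (jumpAt alim t)) ∧
      Tendsto (fun n => jumpAt (b n) (tn n)) atTop (𝓝 (jumpAt blim t)) := by
  intro t
  have hzero : jumpAt alim t = 0 ∨ jumpAt blim t = 0 := by
    rcases eq_zero_or_pos t with rfl | ht
    · exact Or.inl (jumpAt_zero alim)
    · exact mul_eq_zero.1 (hnojump t ht)
  rcases hzero with ha | hb
  · obtain ⟨tn, htn, hbjump⟩ := hJb.exists_tendsto_jumpAt hbcad hblim t
    refine ⟨tn, htn, ?_, hbjump⟩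
    rw [ha]
    exact hJa.tendsto_jumpAt_of_jumpAt_eq_zero hacad halim ha htn
  · obtain ⟨tn, htn, hajump⟩ := hJa.exists_tendsto_jumpAt hacad halim t
    refine ⟨tn, htn, hajump, ?_⟩
    rw [hb]
    exact hJb.tendsto_jumpAt_of_jumpAt_eq_zero hbcad hblim hb htn
end
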